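/- arXiv:2506.01932 — 5 statements merged into one kernel-verified Lean document; each statement's English description precedes it below -/
import Mathlib

section
/- Let A be a commutative ℝ-algebra, let X : Fin n → Derivation ℝ A A be a family of derivations and let Y : Derivation ℝ A A be a pseudosymmetry of the family X, i.e. there exist β : Fin n → A and α : Fin n → Fin n → A with ⁅Y, X i⁆ = β i • Y + ∑ s, α i s • X s for every i. Let ξ : Fin n → A and ν : Fin m → A satisfy Y (ξ h) = 0 for all h and Y (ν j) = 0 for all j. Let M be the n×n matrix over A with entries M i h = X i (ξ h) and suppose M is invertible (its determinant is a unit of A). Define the n×m matrix N = M⁻¹ * P, where P i j = X i (ν j). Then Y (N i j) = 0 for all i and j. -/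
/-- invariants of a pseudosymmetry are preserved by the
"prolongation" matrix formula `N = M⁻¹ * P`. -/
theorem pseudosymmetry_derived_invariants
    {n m : ℕ} {A : Type*} [CommRing A] [Algebra ℝ A]
    (X : Fin n → Derivation ℝ A A) (Y : Derivation ℝ A A)
    (β : Fin n → A) (α : Fin n → Fin n → A)
    (hps : ∀ i, ⁅Y, X i⁆ = β i • Y + ∑ s, α i s • X s)
    (ξ : Fin n → A) (ν : Fin m → A)
    (hξ : ∀ h, Y (ξ h) = 0) (hν : ∀ j, Y (ν j) = 0)
    (M : Matrix (Fin n) (Fin n) A) (hM : ∀ i h, M i h = (X i) (ξ h))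
    (hdet : IsUnit M.det)
    (P : Matrix (Fin n) (Fin m) A) (hP : ∀ i j, P i j = (X i) (ν j)) :
    ∀ i j, Y ((M⁻¹ * P) i j) = 0 := by
  -- key commutation identity, evaluated at invariants
  have key : ∀ i a, Y a = 0 → Y (X i a) = ∑ s, α i s * (X s) a := by
    intro i a ha
    have h := congrArg (fun D : Derivation ℝ A A => D a) (hps i)
    simp only [Derivation.commutator_apply, Derivation.add_apply,
      Derivation.smul_apply, Derivation.coe_add, ha, map_zero, sub_zero,
      mul_zero, zero_add, smul_eq_mul] at h
    rw [h]
    have hsum : ((∑ s, α i s • X s : Derivation ℝ A A) : A → A)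
        = ∑ s, ⇑(α i s • X s) := map_sum Derivation.coeFnAddMonoidHom _ _
    calc (∑ s, α i s • X s : Derivation ℝ A A) a
        = (∑ s, ⇑(α i s • X s)) a := by rw [hsum]
      _ = ∑ s, α i s * (X s) a := by
          rw [Finset.sum_apply]
          exact Finset.sum_congr rfl fun s _ => by
            simp [Derivation.smul_apply]
  set N : Matrix (Fin n) (Fin m) A := M⁻¹ * P with hN
  have hMN : M * N = P := by
    rw [hN, ← Matrix.mul_assoc, Matrix.mul_nonsing_inv M hdet, Matrix.one_mul]
  have hYM : ∀ i h, Y (M i h) = ∑ s, α i s * M s h := by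
    intro i h
    rw [hM i h, key i _ (hξ h)]
    exact Finset.sum_congr rfl fun s _ => by rw [hM]
  have hYP : ∀ i j, Y (P i j) = ∑ s, α i s * P s j := by
    intro i j
    rw [hP i j, key i _ (hν j)]
    exact Finset.sum_congr rfl fun s _ => by rw [hP]
  set Q : Matrix (Fin n) (Fin m) A := fun k j => Y (N k j) with hQ
  have hMQ : M * Q = 0 := by
    ext i j
    have h1 : Y (P i j) = ∑ k, (Y (M i k) * N k j + M i k * Q k j) := by
      conv_lhs => rw [← hMN]
      rw [Matrix.mul_apply, map_sum]
      refine Finset.sum_congr rfl fun k _ => ?_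
      rw [Derivation.leibniz]
      simp only [smul_eq_mul, hQ]
      ring
    have h2 : ∑ k, Y (M i k) * N k j = Y (P i j) := by
      rw [hYP]
      calc ∑ k, Y (M i k) * N k j
          = ∑ k, ∑ s, α i s * M s k * N k j := by
            simp [hYM, Finset.sum_mul]
        _ = ∑ s, α i s * ∑ k, M s k * N k j := by
            rw [Finset.sum_comm]
            simp [Finset.mul_sum, mul_assoc]
        _ = ∑ s, α i s * P s j := by
            refine Finset.sum_congr rfl fun s _ => ?_
            rw [← Matrix.mul_apply, hMN]
    have h3 : ∑ k, M i k * Q k j = 0 := by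
      have := h1
      rw [Finset.sum_add_distrib, h2] at this
      exact left_eq_add.mp this
    simpa [Matrix.mul_apply] using h3
  intro i j
  have : Q = 0 := by
    have := congrArg (fun B => M⁻¹ * B) hMQ
    simpa [← Matrix.mul_assoc, Matrix.nonsing_inv_mul M hdet] using this
  have := congrFun (congrFun this i) j
  simpa [hQ] using this
end

section
/- Let A be a commutative ℝ-algebra, let X : Fin n → Derivation ℝ A A be a family of derivations and let Y : Fin r → Derivation ℝ A A be an r-pseudosymmetry of the family X, i.e. there exist β : Fin r → Fin n → Fin r → A and α : Fin r → Fin n → Fin n → A with ⁅Y k, X i⁆ = ∑ l, β k i l • Y l + ∑ s, α k i s • X s for all k and i. Let ξ : Fin n → A and ν : Fin m → A satisfy Y k (ξ h) = 0 and Y k (ν j) = 0 for all k, h, j. Let M be the n×n matrix over A with entries M i h = X i (ξ h) and suppose M is invertible (its determinant is a unit of A). Define the n×m matrix N = M⁻¹ * P, where P i j = X i (ν j). Then Y k (N i j) = 0 for all k, i and j. -/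
/-!
Fix `k` and write `D = Y k`. On an invariant `f` of all the `Y l`, the pseudosymmetry relation
reduces to `D (X i f) = ∑ s, α k i s * X s f`, so applying `D` entrywise gives `D M = C M` and
`D P = C P` with the same matrix `C = (α k i s)`. Since `D (M⁻¹) = -M⁻¹ (D M) M⁻¹ = -M⁻¹ C`,
the Leibniz rule yields `D (M⁻¹ P) = -M⁻¹ C P + M⁻¹ C P = 0`.
-/

open Matrix

namespace Derivation

variable {R A : Type*} [CommRing R] [CommRing A] [Algebra R A]

theorem finset_sum_apply {ι : Type*} (s : Finset ι) (D : ι → Derivation R A A) (a : A) :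
    (∑ l ∈ s, D l) a = ∑ l ∈ s, D l a :=
  (congrFun (map_sum coeFnAddMonoidHom D s) a).trans (Finset.sum_apply a s _)

section Matrix

variable (D : Derivation R A A) {m n o : Type*}

theorem matrix_map_mul [Fintype n] (Q : Matrix m n A) (S : Matrix n o A) :
    (Q * S).map D = Q.map D * S + Q * S.map D := by
  ext i j
  simp only [map_apply, mul_apply, map_sum, leibniz, smul_eq_mul, mul_comm (S _ _),
    Finset.sum_add_distrib]
  exact add_comm _ _

theorem matrix_map_one [DecidableEq n] : (1 : Matrix n n A).map D = 0 := by
  rw [← diagonal_one, diagonal_map (map_zero D), map_one_eq_zero, diagonal_zero]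

theorem matrix_map_nonsing_inv [Fintype n] [DecidableEq n] {M : Matrix n n A}
    (hM : IsUnit M.det) : M⁻¹.map D = -(M⁻¹ * M.map D * M⁻¹) := by
  have h : M⁻¹.map D * M + M⁻¹ * M.map D = 0 := by
    rw [← matrix_map_mul, nonsing_inv_mul M hM, matrix_map_one]
  calc M⁻¹.map D = M⁻¹.map D * M * M⁻¹ := by
        rw [Matrix.mul_assoc, mul_nonsing_inv M hM, Matrix.mul_one]
    _ = -(M⁻¹ * M.map D * M⁻¹) := by rw [eq_neg_of_add_eq_zero_left h, Matrix.neg_mul]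

theorem matrix_map_nonsing_inv_mul_eq_zero [Fintype n] [DecidableEq n] {M C : Matrix n n A}
    {P : Matrix n o A} (hM : IsUnit M.det) (hDM : M.map D = C * M) (hDP : P.map D = C * P) :
    (M⁻¹ * P).map D = 0 := by
  rw [matrix_map_mul, matrix_map_nonsing_inv D hM, hDM, hDP, Matrix.mul_assoc, Matrix.mul_assoc,
    mul_nonsing_inv M hM, Matrix.mul_one, Matrix.neg_mul, Matrix.mul_assoc, neg_add_cancel]

end Matrix

section Pseudosymmetry

variable {ι κ : Type*} [Fintype ι] [Fintype κ] (D : Derivation R A A)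
  (X : ι → Derivation R A A) (Y : κ → Derivation R A A)

theorem apply_apply_eq_sum_of_commutator_eq {E : Derivation R A A} {β : κ → A} {α : ι → A}
    (hDE : ⁅D, E⁆ = ∑ l, β l • Y l + ∑ s, α s • X s) {f : A} (hDf : D f = 0)
    (hYf : ∀ l, Y l f = 0) : D (E f) = ∑ s, α s * X s f := by
  simpa only [commutator_apply, add_apply, finset_sum_apply, smul_apply, hDf, hYf, map_zero,
    sub_zero, smul_eq_mul, mul_zero, Finset.sum_const_zero, zero_add] using DFunLike.congr_fun hDE f

theorem matrix_map_of_apply_eq_mul {o : Type*} {β : ι → κ → A} {α : ι → ι → A}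
    (hps : ∀ i, ⁅D, X i⁆ = ∑ l, β i l • Y l + ∑ s, α i s • X s) {f : o → A}
    (hDf : ∀ j, D (f j) = 0) (hYf : ∀ l j, Y l (f j) = 0) :
    (Matrix.of fun i j => X i (f j)).map D = Matrix.of α * Matrix.of fun i j => X i (f j) := by
  ext i j
  exact apply_apply_eq_sum_of_commutator_eq D X Y (hps i) (hDf j) (hYf · j)

end Pseudosymmetry

end Derivation

/-- invariants of an r-pseudosymmetry are preserved by the
"prolongation" matrix formula `N = M⁻¹ * P`. -/
theorem r_pseudosymmetry_derived_invariants
    {n m r : ℕ} {A : Type*} [CommRing A] [Algebra ℝ A]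
    (X : Fin n → Derivation ℝ A A) (Y : Fin r → Derivation ℝ A A)
    (β : Fin r → Fin n → Fin r → A) (α : Fin r → Fin n → Fin n → A)
    (hps : ∀ k i, ⁅Y k, X i⁆ = (∑ l, β k i l • Y l) + ∑ s, α k i s • X s)
    (ξ : Fin n → A) (ν : Fin m → A)
    (hξ : ∀ k h, (Y k) (ξ h) = 0) (hν : ∀ k j, (Y k) (ν j) = 0)
    (M : Matrix (Fin n) (Fin n) A) (hM : ∀ i h, M i h = (X i) (ξ h))
    (hdet : IsUnit M.det)
    (P : Matrix (Fin n) (Fin m) A) (hP : ∀ i j, P i j = (X i) (ν j)) :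
    ∀ k i j, (Y k) ((M⁻¹ * P) i j) = 0 := by
  intro k i j
  obtain rfl : M = Matrix.of fun i h => X i (ξ h) := Matrix.ext hM
  obtain rfl : P = Matrix.of fun i j => X i (ν j) := Matrix.ext hP
  have hYM := (Y k).matrix_map_of_apply_eq_mul X Y (hps k) (hξ k) hξ
  have hYP := (Y k).matrix_map_of_apply_eq_mul X Y (hps k) (hν k) hν
  exact congrFun (congrFun ((Y k).matrix_map_nonsing_inv_mul_eq_zero hdet hYM hYP) i) j
end

section
/- Let u : ℝ² → ℝ be a smooth (C^∞) function of (x,t) satisfying the mKdV equation u_t = u_xxx − 6 u² u_x. Then the Miura transform u' := u_x − u² satisfies the KdV equation u'_t = u'_xxx + 6 u' u'_x. -/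
/-!
Put `v = u_x - u²`. Then
`v_t - v_xxx - 6 v v_x = (∂ₓ - 2u) (u_t - u_xxx + 6 u² u_x)`.
The time part `v_t = (∂ₓ - 2u) u_t` only needs `u_xt = u_tx`; the space part
`v_xxx + 6 v v_x = (∂ₓ - 2u) (u_xxx - 6 u² u_x)` is an identity for functions of `x` alone,
proved at each fixed `t`. Since the mKdV expression vanishes identically, so does its
`x`-derivative.
-/

/-- Partial derivative in the first variable `x`. -/
noncomputable def px (f : ℝ → ℝ → ℝ) : ℝ → ℝ → ℝ := fun x t => deriv (fun y => f y t) x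

/-- Partial derivative in the second variable `t`. -/
noncomputable def pt (f : ℝ → ℝ → ℝ) : ℝ → ℝ → ℝ := fun x t => deriv (fun s => f x s) t

open Function

theorem miura_stationary {w : ℝ → ℝ} (hw : ContDiff ℝ 4 w) (x : ℝ) :
    deriv (deriv (deriv fun y => deriv w y - w y ^ 2)) x
        + 6 * (deriv w x - w x ^ 2) * deriv (fun y => deriv w y - w y ^ 2) x
      = deriv (fun y => deriv (deriv (deriv w)) y - 6 * w y ^ 2 * deriv w y) x
        - 2 * w x * (deriv (deriv (deriv w)) x - 6 * w x ^ 2 * deriv w x) := by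
  have d0 : Differentiable ℝ w := hw.differentiable (by norm_num)
  have d1 : Differentiable ℝ (deriv w) := (hw.iterate_deriv' 3 1).differentiable (by norm_num)
  have d2 : Differentiable ℝ (deriv (deriv w)) :=
    (hw.iterate_deriv' 2 2).differentiable (by norm_num)
  have d3 : Differentiable ℝ (deriv (deriv (deriv w))) :=
    (hw.iterate_deriv' 1 3).differentiable (by norm_num)
  have v1 : deriv (fun y => deriv w y - w y ^ 2)
      = fun y => deriv (deriv w) y - 2 * w y * deriv w y := by
    funext y
    simp (disch := fun_prop) [deriv_fun_sub, deriv_fun_pow]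
  have v2 : deriv (deriv fun y => deriv w y - w y ^ 2)
      = fun y => deriv (deriv (deriv w)) y - 2 * (deriv w y ^ 2 + w y * deriv (deriv w) y) := by
    rw [v1]
    funext y
    simp (disch := fun_prop) only [deriv_fun_sub, deriv_fun_mul, deriv_const', zero_mul,
      zero_add, sub_right_inj]
    ring
  rw [v2, v1]
  simp (disch := fun_prop) only [deriv_fun_sub, deriv_fun_mul, deriv_const', zero_mul,
    deriv_fun_add, deriv_fun_pow, Nat.cast_ofNat, Nat.add_one_sub_one, pow_one, zero_add]
  ring

theorem px_curry {F : ℝ × ℝ → ℝ} (hF : Differentiable ℝ F) (x t : ℝ) :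
    px (curry F) x t = fderiv ℝ F (x, t) (1, 0) :=
  ((hF (x, t)).hasFDerivAt.comp_hasDerivAt x
    ((hasDerivAt_id x).prodMk (hasDerivAt_const x t))).deriv

theorem pt_curry {F : ℝ × ℝ → ℝ} (hF : Differentiable ℝ F) (x t : ℝ) :
    pt (curry F) x t = fderiv ℝ F (x, t) (0, 1) :=
  ((hF (x, t)).hasFDerivAt.comp_hasDerivAt t
    ((hasDerivAt_const t x).prodMk (hasDerivAt_id t))).deriv

section

variable {f : ℝ → ℝ → ℝ}

theorem ContDiff.uncurry_px {n : WithTop ℕ∞} (hf : ContDiff ℝ (n + 1) (uncurry f)) :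
    ContDiff ℝ n (uncurry (px f)) := by
  have : uncurry (px f) = fun p => fderiv ℝ (uncurry f) p (1, 0) :=
    funext fun p => px_curry (hf.differentiable (by simp)) p.1 p.2
  rw [this]
  exact (hf.fderiv_right le_rfl).clm_apply contDiff_const

theorem pt_px_comm (hf : ContDiff ℝ 2 (uncurry f)) : pt (px f) = px (pt f) := by
  have hf1 : Differentiable ℝ (uncurry f) := hf.differentiable (by norm_num)
  have hf2 : Differentiable ℝ (fderiv ℝ (uncurry f)) :=
    (hf.fderiv_right (m := 1) le_rfl).differentiable one_ne_zero
  have hpx : px f = curry fun p => fderiv ℝ (uncurry f) p (1, 0) := funext₂ (px_curry hf1)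
  have hpt : pt f = curry fun p => fderiv ℝ (uncurry f) p (0, 1) := funext₂ (pt_curry hf1)
  funext x t
  rw [hpx, hpt, pt_curry (hf2.clm_apply (differentiable_const _)),
    px_curry (hf2.clm_apply (differentiable_const _))]
  simp only [fderiv_clm_apply (hf2 _) (differentiableAt_const _), fderiv_fun_const,
    Pi.zero_apply, ContinuousLinearMap.comp_zero, zero_add, ContinuousLinearMap.flip_apply]
  exact hf.contDiffAt.isSymmSndFDerivAt (by simp) _ _

end

theorem pt_px_sub_sq {u : ℝ → ℝ → ℝ} (hu : ContDiff ℝ 2 (uncurry u)) (x t : ℝ) :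
    pt (fun x t => px u x t - u x t ^ 2) x t = px (pt u) x t - 2 * u x t * pt u x t := by
  have slice {g : ℝ → ℝ → ℝ} (hg : Differentiable ℝ (uncurry g)) : Differentiable ℝ (g x) :=
    hg.comp ((differentiable_const x).prodMk differentiable_id)
  have h0 := slice (hu.differentiable (by norm_num))
  have h1 := slice ((ContDiff.uncurry_px (n := 1) hu).differentiable one_ne_zero)
  rw [← pt_px_comm hu]
  show deriv (fun s => px u x s - u x s ^ 2) t = deriv (px u x) t - 2 * u x t * deriv (u x) t
  rw [deriv_fun_sub (h1 t) ((h0 t).fun_pow 2), deriv_fun_pow (h0 t)]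
  ring

/-- the Miura transformation `u' = u_x − u²` maps solutions of the mKdV
equation `u_t = u_xxx − 6u²u_x` to solutions of the KdV equation
`u'_t = u'_xxx + 6u'u'_x`. -/
theorem miura (u : ℝ → ℝ → ℝ)
    (hu : ContDiff ℝ (⊤ : ℕ∞) (Function.uncurry u))
    (hmkdv : ∀ x t, pt u x t = px (px (px u)) x t - 6 * (u x t) ^ 2 * px u x t) :
    ∀ x t,
      pt (fun x t => px u x t - (u x t) ^ 2) x t
        = px (px (px (fun x t => px u x t - (u x t) ^ 2))) x t
          + 6 * (px u x t - (u x t) ^ 2)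
            * px (fun x t => px u x t - (u x t) ^ 2) x t := by
  intro x t
  have hu4 : ContDiff ℝ 4 (uncurry u) := hu.of_le (WithTop.coe_le_coe.2 le_top)
  have hmkdv' : pt u = fun x t => px (px (px u)) x t - 6 * u x t ^ 2 * px u x t :=
    funext₂ hmkdv
  rw [pt_px_sub_sq (hu4.of_le (by norm_num)), hmkdv']
  exact (miura_stationary (hu4.comp (contDiff_id.prodMk contDiff_const)) x).symm
end

section
/- Let u : ℝ² → ℝ be a smooth (C^∞) function of (x,t) satisfying the mKdV equation u_t = u_xxx − 6 u² u_x. Define ν¹ := u_x − u² and ν² := u_t − 2u(u_xx − 2u u_x) − 2u²(u_x − u²). Then the pair (ν¹, ν²) satisfies the system ν¹_t = ν²_x + 2 ν¹ ν¹_x and ν² = ν¹_xx + 2 (ν¹)². -/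
open Function

section PartialDerivatives

variable {f : ℝ → ℝ → ℝ}

theorem hasDerivAt_fderiv_apply_x (hf : Differentiable ℝ (uncurry f)) (x t : ℝ) :
    HasDerivAt (fun y => f y t) (fderiv ℝ (uncurry f) (x, t) (1, 0)) x :=
  (hf (x, t)).hasFDerivAt.comp_hasDerivAt (l := uncurry f) x
    ((hasDerivAt_id x).prodMk (hasDerivAt_const x t))

theorem hasDerivAt_fderiv_apply_t (hf : Differentiable ℝ (uncurry f)) (x t : ℝ) :
    HasDerivAt (fun s => f x s) (fderiv ℝ (uncurry f) (x, t) (0, 1)) t :=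
  (hf (x, t)).hasFDerivAt.comp_hasDerivAt (l := uncurry f) t
    ((hasDerivAt_const t x).prodMk (hasDerivAt_id t))

theorem px_eq_fderiv (hf : Differentiable ℝ (uncurry f)) (x t : ℝ) :
    px f x t = fderiv ℝ (uncurry f) (x, t) (1, 0) :=
  (hasDerivAt_fderiv_apply_x hf x t).deriv

theorem pt_eq_fderiv (hf : Differentiable ℝ (uncurry f)) (x t : ℝ) :
    pt f x t = fderiv ℝ (uncurry f) (x, t) (0, 1) :=
  (hasDerivAt_fderiv_apply_t hf x t).deriv

theorem uncurry_px (hf : Differentiable ℝ (uncurry f)) :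
    uncurry (px f) = fun p => fderiv ℝ (uncurry f) p (1, 0) :=
  funext fun p => px_eq_fderiv hf p.1 p.2

theorem uncurry_pt (hf : Differentiable ℝ (uncurry f)) :
    uncurry (pt f) = fun p => fderiv ℝ (uncurry f) p (0, 1) :=
  funext fun p => pt_eq_fderiv hf p.1 p.2

theorem hasDerivAt_px (hf : Differentiable ℝ (uncurry f)) (x t : ℝ) :
    HasDerivAt (fun y => f y t) (px f x t) x :=
  px_eq_fderiv hf x t ▸ hasDerivAt_fderiv_apply_x hf x t

theorem hasDerivAt_pt (hf : Differentiable ℝ (uncurry f)) (x t : ℝ) :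
    HasDerivAt (fun s => f x s) (pt f x t) t :=
  pt_eq_fderiv hf x t ▸ hasDerivAt_fderiv_apply_t hf x t

theorem contDiff_px {m n : WithTop ℕ∞} (hf : ContDiff ℝ n (uncurry f)) (hmn : m + 1 ≤ n) :
    ContDiff ℝ m (uncurry (px f)) := by
  rw [uncurry_px (hf.differentiable (zero_lt_one.trans_le (le_add_self.trans hmn)).ne')]
  exact (hf.fderiv_right hmn).clm_apply contDiff_const

theorem differentiable_px (hf : ContDiff ℝ 2 (uncurry f)) : Differentiable ℝ (uncurry (px f)) :=
  (contDiff_px hf (m := 1) (by norm_num)).differentiable one_ne_zero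

theorem pt_px_eq_px_pt (hf : ContDiff ℝ 2 (uncurry f)) (x t : ℝ) :
    pt (px f) x t = px (pt f) x t := by
  have hd : Differentiable ℝ (uncurry f) := hf.differentiable two_ne_zero
  have hd' : Differentiable ℝ (fderiv ℝ (uncurry f)) :=
    (hf.fderiv_right (m := 1) (by norm_num)).differentiable one_ne_zero
  have hd'_apply (v : ℝ × ℝ) : Differentiable ℝ fun p => fderiv ℝ (uncurry f) p v :=
    fun p => (hd' p).clm_apply (differentiableAt_const v)
  have hsnd (v w : ℝ × ℝ) : fderiv ℝ (fun p => fderiv ℝ (uncurry f) p v) (x, t) w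
      = fderiv ℝ (fderiv ℝ (uncurry f)) (x, t) w v := by
    simp [fderiv_clm_apply (hd' _) (differentiableAt_const v)]
  rw [pt_eq_fderiv (uncurry_px hd ▸ hd'_apply _), px_eq_fderiv (uncurry_pt hd ▸ hd'_apply _),
    uncurry_px hd, uncurry_pt hd, hsnd, hsnd]
  exact hf.contDiffAt.isSymmSndFDerivAt (by simp) _ _

end PartialDerivatives

section MKdV

variable {u : ℝ → ℝ → ℝ}

def SolvesMKdV (u : ℝ → ℝ → ℝ) : Prop :=
  ∀ x t, pt u x t = px (px (px u)) x t - 6 * (u x t) ^ 2 * px u x t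

def SolvesKdV (v : ℝ → ℝ → ℝ) : Prop :=
  ∀ x t, pt v x t = px (px (px v)) x t + 6 * v x t * px v x t

noncomputable def nu1 (u : ℝ → ℝ → ℝ) : ℝ → ℝ → ℝ := fun x t => px u x t - (u x t) ^ 2

noncomputable def nu2 (u : ℝ → ℝ → ℝ) : ℝ → ℝ → ℝ := fun x t =>
  pt u x t - 2 * u x t * (px (px u) x t - 2 * u x t * px u x t)
    - 2 * (u x t) ^ 2 * (px u x t - (u x t) ^ 2)

theorem contDiff_nu1 {n : WithTop ℕ∞} (hu : ContDiff ℝ (n + 1) (uncurry u)) :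
    ContDiff ℝ n (uncurry (nu1 u)) :=
  (contDiff_px hu le_rfl).sub ((hu.of_le le_self_add).pow 2)

theorem px_nu1 (hu : ContDiff ℝ 2 (uncurry u)) (x t : ℝ) :
    px (nu1 u) x t = px (px u) x t - 2 * u x t * px u x t := by
  have hu₀ := hasDerivAt_px (hu.differentiable two_ne_zero) x t
  have hu₁ := hasDerivAt_px (differentiable_px hu) x t
  exact (hu₁.sub (hu₀.pow 2)).deriv.trans (by push_cast; ring)

theorem px_px_nu1 (hu : ContDiff ℝ 3 (uncurry u)) (x t : ℝ) :
    px (px (nu1 u)) x t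
      = px (px (px u)) x t - 2 * (px u x t) ^ 2 - 2 * u x t * px (px u) x t := by
  have hux : ContDiff ℝ 2 (uncurry (px u)) := contDiff_px hu (by norm_num)
  have hu₀ := hasDerivAt_px (hu.differentiable three_ne_zero) x t
  have hu₁ := hasDerivAt_px (hux.differentiable two_ne_zero) x t
  have hu₂ := hasDerivAt_px (differentiable_px hux) x t
  rw [funext₂ (px_nu1 (hu.of_le (by norm_num)))]
  exact (hu₂.sub ((hu₀.const_mul 2).mul hu₁)).deriv.trans (by ring)

theorem px_px_px_nu1 (hu : ContDiff ℝ 4 (uncurry u)) (x t : ℝ) :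
    px (px (px (nu1 u))) x t = px (px (px (px u))) x t
      - 6 * px u x t * px (px u) x t - 2 * u x t * px (px (px u)) x t := by
  have hux : ContDiff ℝ 3 (uncurry (px u)) := contDiff_px hu (by norm_num)
  have huxx : ContDiff ℝ 2 (uncurry (px (px u))) := contDiff_px hux (by norm_num)
  have hu₀ := hasDerivAt_px (hu.differentiable four_ne_zero) x t
  have hu₁ := hasDerivAt_px (hux.differentiable three_ne_zero) x t
  have hu₂ := hasDerivAt_px (huxx.differentiable two_ne_zero) x t
  have hu₃ := hasDerivAt_px (differentiable_px huxx) x t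
  rw [funext₂ (px_px_nu1 (hu.of_le (by norm_num)))]
  exact (((hu₃.sub ((hu₁.pow 2).const_mul 2)).sub ((hu₀.const_mul 2).mul hu₂))).deriv.trans
    (by push_cast; ring)

theorem pt_nu1 (hu : ContDiff ℝ 2 (uncurry u)) (x t : ℝ) :
    pt (nu1 u) x t = px (pt u) x t - 2 * u x t * pt u x t := by
  have hu₀ := hasDerivAt_pt (hu.differentiable two_ne_zero) x t
  have hu₁ := hasDerivAt_pt (differentiable_px hu) x t
  rw [← pt_px_eq_px_pt hu]
  exact (hu₁.sub (hu₀.pow 2)).deriv.trans (by push_cast; ring)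

theorem SolvesMKdV.px_pt (hmkdv : SolvesMKdV u) (hu : ContDiff ℝ 4 (uncurry u)) (x t : ℝ) :
    px (pt u) x t = px (px (px (px u))) x t
      - 12 * u x t * (px u x t) ^ 2 - 6 * (u x t) ^ 2 * px (px u) x t := by
  have hux : ContDiff ℝ 3 (uncurry (px u)) := contDiff_px hu (by norm_num)
  have hu₀ := hasDerivAt_px (hu.differentiable four_ne_zero) x t
  have hu₁ := hasDerivAt_px (hux.differentiable three_ne_zero) x t
  have hu₃ := hasDerivAt_px (differentiable_px (contDiff_px hux (by norm_num))) x t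
  rw [funext₂ hmkdv]
  exact (hu₃.sub (((hu₀.pow 2).const_mul 6).mul hu₁)).deriv.trans
    (by simp only [Pi.pow_apply]; push_cast; ring)

theorem SolvesMKdV.nu2_eq (hmkdv : SolvesMKdV u) (hu : ContDiff ℝ 3 (uncurry u)) (x t : ℝ) :
    nu2 u x t = px (px (nu1 u)) x t + 2 * (nu1 u x t) ^ 2 := by
  rw [px_px_nu1 hu, nu2, nu1, hmkdv x t]
  ring

theorem SolvesMKdV.px_nu2 (hmkdv : SolvesMKdV u) (hu : ContDiff ℝ 4 (uncurry u)) (x t : ℝ) :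
    px (nu2 u) x t = px (px (px (nu1 u))) x t + 4 * nu1 u x t * px (nu1 u) x t := by
  have hν : ContDiff ℝ 3 (uncurry (nu1 u)) := contDiff_nu1 hu
  have hν₀ := hasDerivAt_px (hν.differentiable three_ne_zero) x t
  have hν₂ := hasDerivAt_px (differentiable_px (contDiff_px hν (by norm_num))) x t
  rw [funext₂ (hmkdv.nu2_eq (hu.of_le (by norm_num)))]
  exact (hν₂.add ((hν₀.pow 2).const_mul 2)).deriv.trans (by push_cast; ring)

theorem SolvesMKdV.solvesKdV_nu1 (hmkdv : SolvesMKdV u) (hu : ContDiff ℝ 4 (uncurry u)) :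
    SolvesKdV (nu1 u) := by
  intro x t
  rw [pt_nu1 (hu.of_le (by norm_num)), hmkdv.px_pt hu, hmkdv x t, px_px_px_nu1 hu,
    px_nu1 (hu.of_le (by norm_num)), nu1]
  ring

end MKdV

/-- for a solution of mKdV `u_t = u_xxx − 6u²u_x`, the invariants
`ν¹ = u_x − u²` and `ν² = u_t − 2u(u_xx − 2uu_x) − 2u²(u_x − u²)` satisfy the
factorized system `ν¹_t = ν²_x + 2ν¹ν¹_x` and `ν² = ν¹_xx + 2(ν¹)²`. -/
theorem mkdv_factorization (u : ℝ → ℝ → ℝ)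
    (hu : ContDiff ℝ (⊤ : ℕ∞) (Function.uncurry u))
    (hmkdv : ∀ x t, pt u x t = px (px (px u)) x t - 6 * (u x t) ^ 2 * px u x t) :
    ∀ x t,
      pt (fun x t => px u x t - (u x t) ^ 2) x t
          = px (fun x t =>
                pt u x t - 2 * u x t * (px (px u) x t - 2 * u x t * px u x t)
                  - 2 * (u x t) ^ 2 * (px u x t - (u x t) ^ 2)) x t
            + 2 * (px u x t - (u x t) ^ 2)
              * px (fun x t => px u x t - (u x t) ^ 2) x t
      ∧ pt u x t - 2 * u x t * (px (px u) x t - 2 * u x t * px u x t)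
            - 2 * (u x t) ^ 2 * (px u x t - (u x t) ^ 2)
          = px (px (fun x t => px u x t - (u x t) ^ 2)) x t
            + 2 * (px u x t - (u x t) ^ 2) ^ 2 := by
  have hu₄ : ContDiff ℝ 4 (uncurry u) := hu.of_le (WithTop.coe_le_coe.mpr le_top)
  have hmkdv : SolvesMKdV u := hmkdv
  intro x t
  change pt (nu1 u) x t = px (nu2 u) x t + 2 * nu1 u x t * px (nu1 u) x t
    ∧ nu2 u x t = px (px (nu1 u)) x t + 2 * (nu1 u x t) ^ 2
  refine ⟨?_, hmkdv.nu2_eq (hu₄.of_le (by norm_num)) x t⟩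
  rw [hmkdv.solvesKdV_nu1 hu₄ x t, hmkdv.px_nu2 hu₄]
  ring
end

section
/- Let λ ∈ ℝ and let z, ρ : ℝ² → ℝ be smooth (C^∞) functions of (x,t) satisfying z_t = −6 z z_x − z_xxx, ρ_x = −ρ² − z − λ, and ρ_t = −2(2λ − z)ρ² − 2 z_x ρ + z_xx + 2z² − 2λz − 4λ². Then z' := −z − 2ρ² − 2λ satisfies the KdV equation z'_t = −6 z' z'_x − z'_xxx. -/
open Function

section PartialDerivatives

variable {f : ℝ → ℝ → ℝ}

theorem contDiff_infty_px (hf : ContDiff ℝ (⊤ : ℕ∞) (uncurry f)) :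
    ContDiff ℝ (⊤ : ℕ∞) (uncurry (px f)) :=
  contDiff_px hf (by exact_mod_cast le_top)

end PartialDerivatives

def IsKdVSolution (u : ℝ → ℝ → ℝ) : Prop :=
  ∀ x t, pt u x t = -6 * u x t * px u x t - px (px (px u)) x t

def backlund (lam : ℝ) (z ρ : ℝ → ℝ → ℝ) : ℝ → ℝ → ℝ :=
  fun x t => -z x t - 2 * (ρ x t) ^ 2 - 2 * lam

section Backlund

variable {lam : ℝ} {z ρ : ℝ → ℝ → ℝ}
  (hz : ContDiff ℝ (⊤ : ℕ∞) (uncurry z)) (hρ : ContDiff ℝ (⊤ : ℕ∞) (uncurry ρ))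
  (hρx : ∀ x t, px ρ x t = -(ρ x t) ^ 2 - z x t - lam) (hkdv : IsKdVSolution z)
  (hρt : ∀ x t, pt ρ x t
    = -2 * (2 * lam - z x t) * (ρ x t) ^ 2 - 2 * px z x t * ρ x t
      + px (px z) x t + 2 * (z x t) ^ 2 - 2 * lam * z x t - 4 * lam ^ 2)

include hz hρ hρx

theorem px_backlund :
    px (backlund lam z ρ) = fun x t =>
      -px z x t + 4 * ρ x t ^ 3 + 4 * ρ x t * z x t + 4 * lam * ρ x t := by
  funext x t
  have hz₀ := hasDerivAt_px (hz.differentiable (by simp)) x t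
  have hρ₀ := hasDerivAt_px (hρ.differentiable (by simp)) x t
  have h := (hz₀.neg.sub ((hρ₀.pow 2).const_mul 2)).sub_const (2 * lam)
  refine h.deriv.trans ?_
  rw [hρx]
  push_cast
  ring

theorem px_px_backlund :
    px (px (backlund lam z ρ)) = fun x t =>
      -px (px z) x t + 4 * px z x t * ρ x t - 12 * ρ x t ^ 4 - 16 * z x t * ρ x t ^ 2
        - 4 * z x t ^ 2 - 16 * lam * ρ x t ^ 2 - 8 * lam * z x t - 4 * lam ^ 2 := by
  rw [px_backlund hz hρ hρx]
  funext x t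
  have hz₀ := hasDerivAt_px (hz.differentiable (by simp)) x t
  have hz₁ := hasDerivAt_px ((contDiff_infty_px hz).differentiable (by simp)) x t
  have hρ₀ := hasDerivAt_px (hρ.differentiable (by simp)) x t
  have h := (((hz₁.neg.add ((hρ₀.pow 3).const_mul 4)).add ((hρ₀.const_mul 4).mul hz₀)).add
    (hρ₀.const_mul (4 * lam)))
  refine h.deriv.trans ?_
  rw [hρx]
  push_cast
  ring

theorem px_px_px_backlund :
    px (px (px (backlund lam z ρ))) = fun x t =>
      -px (px (px z)) x t + 4 * px (px z) x t * ρ x t - 20 * px z x t * ρ x t ^ 2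
        - 12 * lam * px z x t - 12 * z x t * px z x t + 48 * ρ x t ^ 5
        + 80 * z x t * ρ x t ^ 3 + 80 * lam * ρ x t ^ 3 + 32 * z x t ^ 2 * ρ x t
        + 64 * lam * z x t * ρ x t + 32 * lam ^ 2 * ρ x t := by
  rw [px_px_backlund hz hρ hρx]
  funext x t
  have hz₁' : ContDiff ℝ (⊤ : ℕ∞) (uncurry (px z)) := contDiff_infty_px hz
  have hz₀ := hasDerivAt_px (hz.differentiable (by simp)) x t
  have hz₁ := hasDerivAt_px (hz₁'.differentiable (by simp)) x t
  have hz₂ := hasDerivAt_px ((contDiff_infty_px hz₁').differentiable (by simp)) x t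
  have hρ₀ := hasDerivAt_px (hρ.differentiable (by simp)) x t
  have h := ((((((hz₂.neg.add ((hz₁.const_mul 4).mul hρ₀)).sub ((hρ₀.pow 4).const_mul 12)).sub
    ((hz₀.const_mul 16).mul (hρ₀.pow 2))).sub ((hz₀.pow 2).const_mul 4)).sub
    ((hρ₀.pow 2).const_mul (16 * lam))).sub (hz₀.const_mul (8 * lam))).sub_const
    (4 * lam ^ 2)
  refine h.deriv.trans ?_
  rw [hρx]
  simp only [Pi.pow_apply]
  push_cast
  ring

omit hρx in
include hkdv hρt in
theorem pt_backlund :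
    pt (backlund lam z ρ) = fun x t =>
      px (px (px z)) x t - 4 * px (px z) x t * ρ x t + 8 * px z x t * ρ x t ^ 2
        + 6 * z x t * px z x t - 8 * z x t ^ 2 * ρ x t - 8 * z x t * ρ x t ^ 3
        + 16 * lam * ρ x t ^ 3 + 8 * lam * z x t * ρ x t + 16 * lam ^ 2 * ρ x t := by
  funext x t
  have hz₀ := hasDerivAt_pt (hz.differentiable (by simp)) x t
  have hρ₀ := hasDerivAt_pt (hρ.differentiable (by simp)) x t
  have h := (hz₀.neg.sub ((hρ₀.pow 2).const_mul 2)).sub_const (2 * lam)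
  refine h.deriv.trans ?_
  rw [hkdv, hρt]
  push_cast
  ring

include hkdv hρt in
theorem isKdVSolution_backlund :
    IsKdVSolution (backlund lam z ρ) := by
  intro x t
  rw [pt_backlund hz hρ hkdv hρt, px_px_px_backlund hz hρ hρx, px_backlund hz hρ hρx, backlund]
  ring

end Backlund

/-- the auto-Bäcklund transformation `z' = −z − 2ρ² − 2λ` of KdV:
if `z` solves KdV and `ρ` solves the associated Riccati covering, then `z'` solves
KdV again. -/
theorem kdv_auto_backlund (lam : ℝ) (z ρ : ℝ → ℝ → ℝ)
    (hz : ContDiff ℝ (⊤ : ℕ∞) (Function.uncurry z))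
    (hρ : ContDiff ℝ (⊤ : ℕ∞) (Function.uncurry ρ))
    (hkdv : ∀ x t, pt z x t = -6 * z x t * px z x t - px (px (px z)) x t)
    (hρx : ∀ x t, px ρ x t = -(ρ x t) ^ 2 - z x t - lam)
    (hρt : ∀ x t, pt ρ x t
      = -2 * (2 * lam - z x t) * (ρ x t) ^ 2 - 2 * px z x t * ρ x t
        + px (px z) x t + 2 * (z x t) ^ 2 - 2 * lam * z x t - 4 * lam ^ 2) :
    ∀ x t,
      pt (fun x t => -z x t - 2 * (ρ x t) ^ 2 - 2 * lam) x t
        = -6 * (-z x t - 2 * (ρ x t) ^ 2 - 2 * lam)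
            * px (fun x t => -z x t - 2 * (ρ x t) ^ 2 - 2 * lam) x t
          - px (px (px (fun x t => -z x t - 2 * (ρ x t) ^ 2 - 2 * lam))) x t :=
  isKdVSolution_backlund hz hρ hρx hkdv hρt
end
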